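/- arXiv:1912.07672 — 4 statements merged into one kernel-verified Lean document; each statement's English description precedes it below -/
import Mathlib

section
/- The twisted group algebra F^σ T admits a degree-inverting involution if and only if [σ]² = 1 in H²(T, F^×). -/
/-- A 2-cocycle on `T` with values in `Fˣ` (trivial action). -/
def IsCocycle {T : Type*} [Group T] {F : Type*} [Field F] (σ : T → T → Fˣ) : Prop :=
  ∀ u v w : T, σ u v * σ (u * v) w = σ u (v * w) * σ v w

/-- The twisted product on `F^σ T = T →₀ F`, determined on the basis by
`X_u * X_v = σ(u,v) X_{uv}`. -/
noncomputable def twistedMul {T : Type*} [Group T] {F : Type*} [Field F]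
    (σ : T → T → Fˣ) (f g : T →₀ F) : T →₀ F :=
  f.sum fun u a => g.sum fun v b => Finsupp.single (u * v) (a * b * (σ u v : F))

/-- A degree-inverting involution of `F^σ T`: an `F`-linear bijection which is an
anti-automorphism, squares to the identity, and maps the homogeneous component of
degree `u` (the span of `X_u`) into the component of degree `u⁻¹`. -/
def IsDegInvInvolution {T : Type*} [Group T] {F : Type*} [Field F]
    (σ : T → T → Fˣ) (ρ : (T →₀ F) ≃ₗ[F] (T →₀ F)) : Prop :=
  (∀ f g : T →₀ F, ρ (twistedMul σ f g) = twistedMul σ (ρ g) (ρ f)) ∧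
  (∀ f : T →₀ F, ρ (ρ f) = f) ∧
  (∀ (u : T) (a : F), ∃ c : F, ρ (Finsupp.single u a) = Finsupp.single u⁻¹ c)

/-! A degree-inverting involution has the form `X_u ↦ c u • X_{u⁻¹}` with `c u ∈ Fˣ`, and such a
map is anti-multiplicative exactly when `c (u v) σ(u,v) = c u c v σ(v⁻¹,u⁻¹)`; evaluating this
identity at `(1,1)` and `(u,u⁻¹)` gives `c u⁻¹ c u = 1`, so the map is then an involution.
The cocycle identity gives `σ(u,v) σ(uv,(uv)⁻¹) σ(v⁻¹,u⁻¹) = σ(u,u⁻¹) σ(v,v⁻¹)`, which turns the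
condition on `c` into `σ² = ∂μ` for `μ u = σ(u,u⁻¹) c u`. -/

section TwistedGroupAlgebra

variable {T : Type*} [Group T] {F : Type*} [Field F] (σ : T → T → Fˣ)

open Finsupp

theorem twistedMul_single (u v : T) (a b : F) :
    twistedMul σ (single u a) (single v b) = single (u * v) (a * b * (σ u v : F)) := by
  unfold twistedMul
  rw [sum_single_index, sum_single_index] <;> simp

theorem twistedMul_add_left (f f' g : T →₀ F) :
    twistedMul σ (f + f') g = twistedMul σ f g + twistedMul σ f' g := by
  unfold twistedMul
  rw [sum_add_index' (by simp)]
  intro u a a'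
  rw [← sum_add]
  congr 1
  ext v b
  rw [add_mul, add_mul, single_add]

theorem twistedMul_add_right (f g g' : T →₀ F) :
    twistedMul σ f (g + g') = twistedMul σ f g + twistedMul σ f g' := by
  unfold twistedMul
  rw [← sum_add]
  congr 1
  ext u a
  rw [sum_add_index' (by simp)]
  intro v b b'
  rw [mul_add, add_mul, single_add]

theorem map_twistedMul_of_single (ρ : (T →₀ F) →ₗ[F] (T →₀ F))
    (h : ∀ (u v : T) (a b : F), ρ (twistedMul σ (single u a) (single v b)) =
      twistedMul σ (ρ (single v b)) (ρ (single u a)))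
    (f g : T →₀ F) : ρ (twistedMul σ f g) = twistedMul σ (ρ g) (ρ f) := by
  induction f using Finsupp.induction_linear with
  | zero => simp [twistedMul]
  | add f f' hf hf' => rw [twistedMul_add_left, map_add, hf, hf', map_add, twistedMul_add_right]
  | single u a =>
    induction g using Finsupp.induction_linear with
    | zero => simp [twistedMul]
    | add g g' hg hg' =>
      rw [twistedMul_add_right, map_add, hg, hg', map_add, twistedMul_add_left]
    | single v b => exact h u v a b

noncomputable def degInvMap (c : T → Fˣ) : (T →₀ F) →ₗ[F] (T →₀ F) :=
  Finsupp.lsum F fun u => (c u : F) • lsingle u⁻¹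

def IsAntiMulCoeff (c : T → Fˣ) : Prop :=
  ∀ u v, c (u * v) * σ u v = c u * c v * σ v⁻¹ u⁻¹

variable {σ}

theorem degInvMap_single (c : T → Fˣ) (u : T) (a : F) :
    degInvMap c (single u a) = single u⁻¹ (c u * a) := by
  simp [degInvMap, smul_single]

theorem degInvMap_involutive (c : T → Fˣ) (h : ∀ u, c u⁻¹ * c u = 1) :
    Function.Involutive (degInvMap (F := F) c) := by
  have : degInvMap c ∘ₗ degInvMap c = LinearMap.id := lhom_ext fun u a => by
    rw [LinearMap.comp_apply, degInvMap_single, degInvMap_single, inv_inv, ← mul_assoc,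
      ← Units.val_mul, h, Units.val_one, one_mul, LinearMap.id_apply]
  exact LinearMap.congr_fun this

theorem degInvMap_twistedMul_iff (c : T → Fˣ) :
    (∀ f g, degInvMap c (twistedMul σ f g) = twistedMul σ (degInvMap c g) (degInvMap c f)) ↔
      IsAntiMulCoeff σ c := by
  have on_singles : ∀ (u v : T) (a b : F),
      degInvMap c (twistedMul σ (single u a) (single v b)) =
        single (u * v)⁻¹ (c (u * v) * (a * b * σ u v)) ∧
      twistedMul σ (degInvMap c (single v b)) (degInvMap c (single u a)) =
        single (u * v)⁻¹ (c v * b * (c u * a) * σ v⁻¹ u⁻¹) := fun u v a b => by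
    simp only [twistedMul_single, degInvMap_single, mul_inv_rev, and_self]
  constructor
  · intro h u v
    have h₁ := h (single u 1) (single v 1)
    rw [(on_singles u v 1 1).1, (on_singles u v 1 1).2] at h₁
    refine Units.ext ?_
    push_cast
    linear_combination single_injective _ h₁
  · intro h
    refine map_twistedMul_of_single σ _ fun u v a b => ?_
    rw [(on_singles u v a b).1, (on_singles u v a b).2]
    have huv := congrArg Units.val (h u v)
    push_cast at huv
    congr 1
    linear_combination a * b * huv

theorem IsAntiMulCoeff.inv_mul_self {c : T → Fˣ} (hc : IsAntiMulCoeff σ c) (u : T) :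
    c u⁻¹ * c u = 1 := by
  have hc₁ : c 1 = 1 := by simpa using hc 1 1
  have := hc u u⁻¹
  rw [mul_inv_cancel, hc₁, inv_inv, one_mul, right_eq_mul, mul_comm] at this
  exact this

theorem exists_eq_degInvMap {ρ : (T →₀ F) ≃ₗ[F] (T →₀ F)} (hρ : IsDegInvInvolution σ ρ) :
    ∃ c : T → Fˣ, (ρ : (T →₀ F) →ₗ[F] (T →₀ F)) = degInvMap c := by
  obtain ⟨-, hinvol, hdeg⟩ := hρ
  choose c hc using fun u => hdeg u 1
  have hρ_single (u : T) (a : F) : ρ (single u a) = single u⁻¹ (c u * a) := by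
    rw [← smul_single_one u a, map_smul, hc, smul_single, smul_eq_mul, mul_comm]
  have hc_inv (u : T) : c u * c u⁻¹ = 1 := by
    have := hinvol (single u 1)
    rw [hρ_single, hρ_single, inv_inv] at this
    simpa [mul_comm] using single_injective u this
  refine ⟨fun u => Units.mkOfMulEqOne _ _ (hc_inv u), lhom_ext fun u a => ?_⟩
  simp [hρ_single, degInvMap_single]

theorem exists_degInvInvolution_iff_exists_isAntiMulCoeff :
    (∃ ρ : (T →₀ F) ≃ₗ[F] (T →₀ F), IsDegInvInvolution σ ρ) ↔
      ∃ c : T → Fˣ, IsAntiMulCoeff σ c := by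
  constructor
  · rintro ⟨ρ, hρ⟩
    obtain ⟨c, hρc⟩ := exists_eq_degInvMap hρ
    refine ⟨c, (degInvMap_twistedMul_iff c).1 fun f g => ?_⟩
    simpa only [← hρc, LinearEquiv.coe_coe] using hρ.1 f g
  · rintro ⟨c, hc⟩
    have hinvol := degInvMap_involutive c hc.inv_mul_self
    exact ⟨.ofInvolutive _ hinvol, (degInvMap_twistedMul_iff c).2 hc, hinvol,
      fun u a => ⟨_, degInvMap_single c u a⟩⟩

theorem cocycle_mul_inv_rev (hσ : IsCocycle σ) (hσ₁ : ∀ u, σ 1 u = 1) (u v : T) :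
    σ u v * σ (u * v) (u * v)⁻¹ * σ v⁻¹ u⁻¹ = σ u u⁻¹ * σ v v⁻¹ := by
  have h₁ := hσ u v (u * v)⁻¹
  have h₂ := hσ v v⁻¹ u⁻¹
  rw [mul_inv_rev, mul_inv_cancel_left, ← mul_inv_rev] at h₁
  rw [mul_inv_cancel, hσ₁, mul_one, ← mul_inv_rev] at h₂
  rw [h₁, mul_assoc, ← h₂]

theorem sq_eq_coboundary_iff (hσ : IsCocycle σ) (hσ₁ : ∀ u, σ 1 u = 1) (c : T → Fˣ)
    (u v : T) :
    σ u v * σ u v = σ u u⁻¹ * c u * (σ v v⁻¹ * c v) * (σ (u * v) (u * v)⁻¹ * c (u * v))⁻¹ ↔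
      c (u * v) * σ u v = c u * c v * σ v⁻¹ u⁻¹ := by
  have e₁ : σ u v * σ u v * (σ (u * v) (u * v)⁻¹ * c (u * v)) =
      σ u v * σ (u * v) (u * v)⁻¹ * (c (u * v) * σ u v) := by ac_rfl
  have e₂ : σ u u⁻¹ * c u * (σ v v⁻¹ * c v) =
      σ u v * σ (u * v) (u * v)⁻¹ * (c u * c v * σ v⁻¹ u⁻¹) := by
    rw [mul_mul_mul_comm, ← cocycle_mul_inv_rev hσ hσ₁]
    ac_rfl
  rw [eq_mul_inv_iff_mul_eq, e₁, e₂, mul_right_inj]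

theorem exists_isAntiMulCoeff_iff (hσ : IsCocycle σ) (hσ₁ : ∀ u, σ 1 u = 1) :
    (∃ c : T → Fˣ, IsAntiMulCoeff σ c) ↔
      ∃ μ : T → Fˣ, ∀ u v, σ u v * σ u v = μ u * μ v * (μ (u * v))⁻¹ := by
  constructor
  · rintro ⟨c, hc⟩
    exact ⟨fun u => σ u u⁻¹ * c u, fun u v => (sq_eq_coboundary_iff hσ hσ₁ c u v).2 (hc u v)⟩
  · rintro ⟨μ, hμ⟩
    refine ⟨fun u => (σ u u⁻¹)⁻¹ * μ u, fun u v =>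
      (sq_eq_coboundary_iff hσ hσ₁ (fun u => (σ u u⁻¹)⁻¹ * μ u) u v).1 ?_⟩
    simpa only [mul_inv_cancel_left] using hμ u v

end TwistedGroupAlgebra

theorem exists_degInvInvolution_iff_class_sq_eq_one_general
    {T : Type*} [Group T] {F : Type*} [Field F]
    (σ : T → T → Fˣ) (hσ : IsCocycle σ)
    (hnorm : ∀ u : T, σ u 1 = 1 ∧ σ 1 u = 1) :
    (∃ ρ : (T →₀ F) ≃ₗ[F] (T →₀ F), IsDegInvInvolution σ ρ) ↔
    (∃ μ : T → Fˣ, ∀ u v : T, σ u v * σ u v = μ u * μ v * (μ (u * v))⁻¹) :=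
  exists_degInvInvolution_iff_exists_isAntiMulCoeff.trans
    (exists_isAntiMulCoeff_iff hσ fun u => (hnorm u).2)

/-- `F^σ T` admits a degree-inverting involution if and only if `[σ]² = 1` in `H²(T,Fˣ)`,
i.e. `σ²` is a coboundary. -/
theorem exists_degInvInvolution_iff_class_sq_eq_one
    {T : Type*} [Group T] [Finite T] {F : Type*} [Field F]
    (σ : T → T → Fˣ) (hσ : IsCocycle σ)
    (hnorm : ∀ u : T, σ u 1 = 1 ∧ σ 1 u = 1) :
    (∃ ρ : (T →₀ F) ≃ₗ[F] (T →₀ F), IsDegInvInvolution σ ρ) ↔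
    (∃ μ : T → Fˣ, ∀ u v : T, σ u v * σ u v = μ u * μ v * (μ (u * v))⁻¹) :=
  exists_degInvInvolution_iff_class_sq_eq_one_general σ hσ hnorm
end

section
/- Let X be the n×n cyclic permutation matrix and Y = diag(ε^{n-1}, ε^{n-2}, …, ε, 1) where ε is a primitive n-th root of unity in F. Then ε X Y = Y X, Xⁿ = Yⁿ = I, and the set {X^i Y^j : 0 ≤ i,j ≤ n-1} is a vector-space basis of M_n(F). -/
/-!
Let `S a` be the matrix of the translation `i ↦ i + a` of a finite additive group `G`, so that
`S a * S b = S (a + b)` and `S a * diagonal d` is supported on the "diagonal" `{(i, i + a)}` with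
entries `d`. On `G = Fin n` we have `X = S 1` and `Y = diagonal y` with `y i = ε ^ (n - 1 - i)`;
moving `Y` past `X` translates `y` by one, i.e. multiplies it by `ε`, whence `ε X Y = Y X`.
Since distinct translates have disjoint supports, the matrices `S a * diagonal (d j)` are linearly
independent as soon as the `d j` are, and for `d j = y ^ j` this is the Vandermonde determinant
of the distinct values of `y`. The `n²` independent matrices `X ^ i * Y ^ j` then form a basis.
-/

open Matrix

namespace Matrix

variable {G R : Type*} [AddGroup G] [DecidableEq G]

def shift [Zero R] [One R] (a : G) : Matrix G G R :=
  of fun i j => if j = i + a then 1 else 0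

section Semiring

variable [Semiring R]

theorem shift_zero : (shift 0 : Matrix G G R) = 1 := by
  ext i j
  simp [shift, one_apply, eq_comm]

variable [Fintype G]

theorem shift_add (a b : G) : (shift (a + b) : Matrix G G R) = shift a * shift b := by
  ext i j
  simp only [shift, mul_apply, of_apply, ite_mul, one_mul, zero_mul, Finset.sum_ite_eq',
    Finset.mem_univ, if_true, add_assoc]

theorem shift_pow (a : G) (k : ℕ) : (shift a : Matrix G G R) ^ k = shift (k • a) := by
  induction k with
  | zero => rw [pow_zero, zero_nsmul, shift_zero]
  | succ k ih => rw [pow_succ, ih, succ_nsmul, shift_add]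

theorem shift_pow_card (a : G) : (shift a : Matrix G G R) ^ Fintype.card G = 1 := by
  rw [shift_pow, card_nsmul_eq_zero, shift_zero]

theorem shift_mul_diagonal_apply (a : G) (d : G → R) (i j : G) :
    (shift a * diagonal d : Matrix G G R) i j = if j = i + a then d j else 0 := by
  simp [shift, mul_diagonal]

theorem diagonal_mul_shift_apply (a : G) (d : G → R) (i j : G) :
    (diagonal d * shift a : Matrix G G R) i j = if j = i + a then d i else 0 := by
  simp [shift, diagonal_mul]

theorem smul_shift_mul_diagonal {c : R} {a : G} {d : G → R} (h : ∀ i, c * d (i + a) = d i) :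
    c • (shift a * diagonal d) = diagonal d * shift a := by
  ext i j
  rw [smul_apply, shift_mul_diagonal_apply, diagonal_mul_shift_apply]
  split_ifs with hj
  · rw [hj, smul_eq_mul, h]
  · rw [smul_zero]

end Semiring

theorem linearIndependent_shift_mul_diagonal [Ring R] [Fintype G] {J : Type*} [Fintype J]
    {d : J → G → R} (hd : LinearIndependent R d) :
    LinearIndependent R fun p : G × J => shift p.1 * diagonal (d p.2) := by
  rw [Fintype.linearIndependent_iff] at hd ⊢
  rintro c hc ⟨a, j⟩
  refine hd (fun j => c (a, j)) ?_ j
  ext k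
  have hdiag : ∀ x : G, k = k - a + x ↔ x = a := fun x => by
    rw [sub_eq_add_neg, add_assoc, left_eq_add, neg_add_eq_zero, eq_comm]
  have hk := congr_fun₂ hc (k - a) k
  simp only [sum_apply, smul_apply, shift_mul_diagonal_apply, hdiag, smul_eq_mul, mul_ite,
    mul_zero, Fintype.sum_prod_type, Finset.sum_ite_irrel, Finset.sum_const_zero,
    Finset.sum_ite_eq', Finset.mem_univ, if_true] at hk
  simpa only [Finset.sum_apply, Pi.smul_apply, smul_eq_mul, zero_apply, Pi.zero_apply] using hk

end Matrix

theorem Fin.val_nsmul_one {n : ℕ} [NeZero n] (a : Fin n) : (a : ℕ) • (1 : Fin n) = a := by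
  open Fin.NatCast in rw [nsmul_one, Fin.cast_val_eq_self]

theorem linearIndependent_pow_of_injective {R : Type*} [CommRing R] [IsDomain R] {n : ℕ}
    {v : Fin n → R} (hv : Function.Injective v) :
    LinearIndependent R fun j : Fin n => v ^ (j : ℕ) :=
  linearIndependent_cols_of_det_ne_zero (det_vandermonde_ne_zero_iff.mpr hv)

section descPowers

variable {M : Type*} [Monoid M] {ε : M} {n : ℕ}

def descPowers (ε : M) (n : ℕ) (i : Fin n) : M :=
  ε ^ (n - 1 - (i : ℕ))

theorem mul_descPowers_add_one [NeZero n] (hε : ε ^ n = 1) (i : Fin n) :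
    ε * descPowers ε n (i + 1) = descPowers ε n i := by
  have hval : ((i + 1 : Fin n) : ℕ) = (i + 1) % n := by
    rw [Fin.val_add, Fin.val_one', Nat.add_mod_mod]
  rw [descPowers, descPowers, ← pow_succ', hval]
  rcases Nat.lt_or_ge ((i : ℕ) + 1) n with h | h
  · rw [Nat.mod_eq_of_lt h]
    congr 1
    omega
  · rw [show (i : ℕ) + 1 = n by omega, Nat.mod_self, Nat.sub_zero,
      Nat.sub_add_cancel NeZero.one_le, hε, show n - 1 - (i : ℕ) = 0 by omega, pow_zero]

theorem descPowers_pow (hε : ε ^ n = 1) : descPowers ε n ^ n = 1 := by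
  funext i
  rw [Pi.pow_apply, descPowers, pow_right_comm, hε, one_pow, Pi.one_apply]

end descPowers

theorem IsPrimitiveRoot.descPowers_injective {M : Type*} [CommMonoid M] {ε : M} {n : ℕ}
    (hε : IsPrimitiveRoot ε n) : Function.Injective (descPowers ε n) := fun a b h => by
  have := hε.pow_inj (by omega) (by omega) h
  omega

/-- For `ε` a primitive `n`-th root of unity, the cyclic permutation matrix `X`
(`X_{i,i+1} = 1` cyclically) and `Y = diag(ε^{n-1}, …, ε, 1)` satisfy `ε X Y = Y X`,
`Xⁿ = Yⁿ = 1`, and `{X^i Y^j : 0 ≤ i,j ≤ n-1}` is a vector-space basis of `M_n(F)`. -/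
theorem epsilon_grading_matrices
    {F : Type*} [Field F] {n : ℕ} [NeZero n] (ε : F) (hε : IsPrimitiveRoot ε n) :
    let X : Matrix (Fin n) (Fin n) F := fun i j => if j = i + 1 then 1 else 0
    let Y : Matrix (Fin n) (Fin n) F := Matrix.diagonal fun i => ε ^ (n - 1 - (i : ℕ))
    ε • (X * Y) = Y * X ∧ X ^ n = 1 ∧ Y ^ n = 1 ∧
      ∃ b : Module.Basis (Fin n × Fin n) F (Matrix (Fin n) (Fin n) F),
        ∀ p : Fin n × Fin n, b p = X ^ (p.1 : ℕ) * Y ^ (p.2 : ℕ) := by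
  intro X Y
  have hX : X = shift 1 := rfl
  have hY : Y = diagonal (descPowers ε n) := rfl
  have hXpow (a : Fin n) : X ^ (a : ℕ) = shift a := by rw [hX, shift_pow, Fin.val_nsmul_one]
  have hli : LinearIndependent F fun p : Fin n × Fin n => X ^ (p.1 : ℕ) * Y ^ (p.2 : ℕ) := by
    simp only [hXpow, hY, diagonal_pow]
    exact (linearIndependent_shift_mul_diagonal
      (linearIndependent_pow_of_injective hε.descPowers_injective) :)
  have hcard : Fintype.card (Fin n × Fin n) = Module.finrank F (Matrix (Fin n) (Fin n) F) := by
    simp [Module.finrank_matrix]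
  refine ⟨?_, ?_, ?_, basisOfLinearIndependentOfCardEqFinrank hli hcard,
    fun p => by rw [coe_basisOfLinearIndependentOfCardEqFinrank]⟩
  · rw [hX, hY]
    exact smul_shift_mul_diagonal (mul_descPowers_add_one hε.pow_eq_one)
  · simpa [hX] using shift_pow_card (R := F) (1 : Fin n)
  · rw [hY, diagonal_pow, descPowers_pow hε.pow_eq_one]
    exact diagonal_one
end

section
/- Let UT_n be the upper triangular matrices over a field F with the elementary G-grading determined by η = (g₁,…,g_{n−1}), where deg e_{i,i+1} = g_i. Then UT_n admits a degree-inverting involution if and only if g_i = g_{n−i}⁻¹ for every i = 1,…,n−1. -/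
/-!
The flip `e_{ij} ↦ e_{n+1-j, n+1-i}` is an involution of `UT_n`, and when `g_{n-k} = g_k⁻¹` it
inverts degrees, since `deg e_{n+1-j, n+1-i} = g_{n+1-j} ⋯ g_{n-i}` is the inverse of
`deg e_{ij} = g_i ⋯ g_{j-1}`.

Conversely, let `ρ` be a degree-inverting involution. The `ρ(e_kk)` are orthogonal idempotents
summing to `1`, so each diagonal position `p` lies on the diagonal of exactly one of them,
say `ρ(e_{σ(p)σ(p)})`. As `ρ(e_{i,i+1}) = ρ(e_{i+1,i+1}) ρ(e_{i,i+1}) ρ(e_ii)`, at a nonzero entry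
`(p, q)` of `ρ(e_{i,i+1})` with no other nonzero entry in the rectangle `r ≥ p, s ≤ q` only the
diagonal entries `(p, p)` of `ρ(e_{i+1,i+1})` and `(q, q)` of `ρ(e_ii)` contribute to the product;
hence `σ(p) = i + 1`, `σ(q) = i` and `p < q`. So `σ⁻¹` is strictly decreasing, i.e. `σ(p) = n + 1 - p`, which puts the entry at
`(n - i, n + 1 - i)`, and comparing degrees gives `g_{n-i} = g_i⁻¹`.
-/

set_option synthInstance.maxHeartbeats 400000

open Matrix

/-- The algebra `UT_n` of upper triangular `n × n` matrices over `F`. -/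
def UTn (n : ℕ) (F : Type*) [Field F] : Subalgebra F (Matrix (Fin n) (Fin n) F) where
  carrier := {M | M.BlockTriangular id}
  mul_mem' := fun ha hb => ha.mul hb
  one_mem' := Matrix.blockTriangular_one
  add_mem' := fun ha hb => ha.add hb
  zero_mem' := Matrix.blockTriangular_zero
  algebraMap_mem' := fun r => by
    rw [Matrix.algebraMap_eq_diagonal]
    exact Matrix.blockTriangular_diagonal (b := id) _

/-- For the elementary grading on `UT_n` determined by `η = (g₁,…,g_{n−1})`
(with `deg e_{i,i+1} = η i`), the degree of the matrix unit `e_{ij}` (for `i ≤ j`)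
is the ordered product `η i * η (i+1) * ⋯ * η (j-1)` (indices `0`-based). -/
def degElem {G : Type*} [Group G] (η : ℕ → G) (i j : ℕ) : G :=
  (((List.range (j - i)).map fun k => η (i + k)).prod)

/-- The homogeneous component of degree `g` of `UT_n` for the elementary grading
given by `η`: those upper triangular matrices all of whose nonzero entries sit
in positions of degree `g`. -/
def utComponent {G : Type*} [Group G] (n : ℕ) {F : Type*} [Field F]
    (η : ℕ → G) (g : G) : Set (UTn n F) :=
  {M | ∀ i j : Fin n, (M : Matrix (Fin n) (Fin n) F) i j ≠ 0 → degElem η i j = g}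

section Triangular

variable {m R : Type*} [LinearOrder m]

theorem Matrix.BlockTriangular.mul_apply_self [Fintype m] [NonUnitalNonAssocSemiring R]
    {A B : Matrix m m R} (hA : A.BlockTriangular id) (hB : B.BlockTriangular id) (p : m) :
    (A * B) p p = A p p * B p p := by
  rw [mul_apply, Finset.sum_eq_single p (fun r _ hr => ?_) (by simp)]
  rcases hr.lt_or_gt with h | h
  · rw [hA h, zero_mul]
  · rw [hB h, mul_zero]

theorem Matrix.BlockTriangular.mul_mul_apply_of_isolated [Fintype m]
    [NonUnitalNonAssocSemiring R] {A Y B : Matrix m m R} (hA : A.BlockTriangular id)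
    (hB : B.BlockTriangular id) {p q : m}
    (hY : ∀ r s, p ≤ r → s ≤ q → Y r s ≠ 0 → r = p ∧ s = q) :
    (A * Y * B) p q = A p p * Y p q * B q q := by
  have hAY : ∀ s ≤ q, (A * Y) p s = if s = q then A p p * Y p q else 0 := by
    intro s hs
    rw [mul_apply, Finset.sum_eq_single p (fun r _ hr => ?_) (by simp)]
    · split_ifs with hsq
      · rw [hsq]
      · by_contra hne
        exact hsq (hY p s le_rfl hs (right_ne_zero_of_mul hne)).2
    · rcases hr.lt_or_gt with h | h
      · rw [hA h, zero_mul]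
      · by_contra hne
        exact hr (hY r s h.le hs (right_ne_zero_of_mul hne)).1
  rw [mul_apply, Finset.sum_eq_single q (fun s _ hs => ?_) (by simp), hAY q le_rfl, if_pos rfl]
  rcases hs.lt_or_gt with h | h
  · rw [hAY s h.le, if_neg hs, zero_mul]
  · rw [hB h, mul_zero]

theorem Matrix.exists_isolated_apply_ne_zero [Finite m] [Zero R] {Y : Matrix m m R}
    (hY : Y ≠ 0) : ∃ p q, Y p q ≠ 0 ∧ ∀ r s, p ≤ r → s ≤ q → Y r s ≠ 0 → r = p ∧ s = q := by
  obtain ⟨p, q, hpq⟩ : ∃ p q, Y p q ≠ 0 := by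
    by_contra! h
    exact hY (Matrix.ext h)
  -- a nonzero entry minimal for the order `(r, s) ≤ (p, q) ↔ p ≤ r ∧ s ≤ q`
  obtain ⟨⟨p, q⟩, hpq, hmin⟩ := exists_minimalFor_of_wellFoundedLT
    (fun x : m × m => Y x.1 x.2 ≠ 0) (fun x => (OrderDual.toDual x.1, x.2)) ⟨(p, q), hpq⟩
  refine ⟨p, q, hpq, fun r s hpr hsq hrs => ?_⟩
  obtain ⟨hrp, hqs⟩ := hmin (j := (r, s)) hrs ⟨hpr, hsq⟩
  exact ⟨le_antisymm hrp hpr, le_antisymm hsq hqs⟩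

end Triangular

theorem Fin.eq_rev_of_forall_exists {m : ℕ} (σ : Fin (m + 1) → Fin (m + 1))
    (h : ∀ i : Fin m, ∃ p q, p ≤ q ∧ σ p = i.succ ∧ σ q = i.castSucc) : σ = Fin.rev := by
  have hsurj : Function.Surjective σ := by
    intro k
    induction k using Fin.lastCases with
    | cast i =>
      obtain ⟨-, q, -, -, hq⟩ := h i
      exact ⟨q, hq⟩
    | last =>
      cases m with
      | zero => exact ⟨0, Fin.ext (by omega)⟩
      | succ m =>
        obtain ⟨p, -, -, hp, -⟩ := h (Fin.last m)
        exact ⟨p, hp⟩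
  let π := (Equiv.ofBijective σ ⟨Finite.injective_iff_surjective.mpr hsurj, hsurj⟩).symm
  have hπσ : ∀ p, π (σ p) = p := (Equiv.ofBijective σ _).symm_apply_apply
  have hπ : StrictAnti π := Fin.strictAnti_iff_succ_lt.mpr fun i => by
    obtain ⟨p, q, hpq, hp, hq⟩ := h i
    rw [← hp, ← hq, hπσ, hπσ]
    refine hpq.lt_of_ne fun hpq => ?_
    rw [hpq, hq] at hp
    exact Fin.castSucc_lt_succ.ne hp
  have hπrev : π ∘ Fin.rev = id := (hπ.comp Fin.rev_strictAnti).eq_id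
  have hπ_eq (k) : π k = Fin.rev k := by simpa using congrFun hπrev (Fin.rev k)
  funext p
  conv_rhs => rw [← hπσ p, hπ_eq, Fin.rev_rev]

section Degree

variable {G : Type*} [Group G] (η : ℕ → G)

theorem degElem_self (i : ℕ) : degElem η i i = 1 := by
  simp [degElem]

theorem degElem_succ (i : ℕ) : degElem η i (i + 1) = η i := by
  simp [degElem]

theorem degElem_mul_degElem {i j k : ℕ} (hij : i ≤ j) (hjk : j ≤ k) :
    degElem η i j * degElem η j k = degElem η i k := by
  obtain ⟨a, rfl⟩ := Nat.exists_eq_add_of_le hij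
  obtain ⟨b, rfl⟩ := Nat.exists_eq_add_of_le hjk
  simp [degElem, add_assoc, List.range_add, Function.comp_def, Nat.add_sub_add_left]

theorem degElem_reflect {n : ℕ} (h : ∀ i, i < n - 1 → η i = (η (n - 2 - i))⁻¹) {i j : ℕ}
    (hij : i ≤ j) (hjn : j < n) : degElem η (n - 1 - j) (n - 1 - i) = (degElem η i j)⁻¹ := by
  induction j, hij using Nat.le_induction with
  | base => rw [degElem_self, degElem_self, inv_one]
  | succ j hij ih =>
    have hη : η (n - 2 - j) = (η j)⁻¹ := inv_eq_iff_eq_inv.mp (h j (by omega)).symm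
    calc degElem η (n - 1 - (j + 1)) (n - 1 - i)
        = degElem η (n - 2 - j) (n - 2 - j + 1) * degElem η (n - 1 - j) (n - 1 - i) := by
          rw [show n - 2 - j + 1 = n - 1 - j by omega, degElem_mul_degElem η (by omega) (by omega)]
          congr 1
          omega
      _ = (degElem η i j * η j)⁻¹ := by
          rw [degElem_succ, hη, ih (by omega), _root_.mul_inv_rev]
      _ = (degElem η i (j + 1))⁻¹ := by
          rw [← degElem_succ η j, degElem_mul_degElem η hij j.le_succ]

end Degree

theorem map_one_of_surjective_of_map_mul_rev {M : Type*} [MulOneClass M] {f : M → M}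
    (hf : Function.Surjective f) (hmul : ∀ x y, f (x * y) = f y * f x) : f 1 = 1 := by
  obtain ⟨u, hu⟩ := hf 1
  calc f 1 = f 1 * f u := by rw [hu, mul_one]
    _ = 1 := by rw [← hmul, mul_one, hu]

theorem Matrix.existsUnique_apply_self_ne_zero {ι m R : Type*} [Fintype ι] [Fintype m]
    [LinearOrder m] [Semiring R] [NoZeroDivisors R] [Nontrivial R] {f : ι → Matrix m m R}
    (htri : ∀ k, (f k).BlockTriangular id) (hsum : ∑ k, f k = 1)
    (horth : ∀ k l, k ≠ l → f k * f l = 0) (p : m) : ∃! k, f k p p ≠ 0 := by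
  obtain ⟨k, -, hk⟩ : ∃ k ∈ Finset.univ, f k p p ≠ 0 := by
    refine Finset.exists_ne_zero_of_sum_ne_zero ?_
    rw [← Matrix.sum_apply, hsum, one_apply_eq]
    exact one_ne_zero
  refine ⟨k, hk, fun l hl => by_contra fun hlk => ?_⟩
  have := (htri l).mul_apply_self (htri k) p
  rw [horth l k hlk, zero_apply] at this
  exact mul_ne_zero hl hk this.symm

namespace UTn

variable {n : ℕ} {F : Type*} [Field F]

def matrixUnit (i j : Fin n) (hij : i ≤ j) : UTn n F :=
  ⟨single i j 1, fun p q hqp => single_apply_of_ne _ _ _ _ _ fun h => by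
    obtain ⟨rfl, rfl⟩ := h
    exact absurd hij (not_le.mpr hqp)⟩

@[simp]
theorem coe_matrixUnit (i j : Fin n) (hij : i ≤ j) :
    ((matrixUnit i j hij : UTn n F) : Matrix (Fin n) (Fin n) F) = single i j 1 := rfl

theorem matrixUnit_mem_utComponent {G : Type*} [Group G] (η : ℕ → G) (i j : Fin n)
    (hij : i ≤ j) : (matrixUnit i j hij : UTn n F) ∈ utComponent n η (degElem η i j) := by
  intro p q hpq
  obtain ⟨rfl, rfl⟩ : i = p ∧ j = q := by
    by_contra h
    exact hpq (single_apply_of_ne _ _ _ _ _ h)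
  rfl

/-- The flip involution `e_{ij} ↦ e_{n+1-j, n+1-i}`. -/
def flip : UTn n F ≃ₗ[F] UTn n F where
  toFun M := ⟨(M.1ᵀ).submatrix Fin.rev Fin.rev, fun _ _ h => M.2 (Fin.rev_lt_rev.mpr h)⟩
  invFun M := ⟨(M.1ᵀ).submatrix Fin.rev Fin.rev, fun _ _ h => M.2 (Fin.rev_lt_rev.mpr h)⟩
  map_add' _ _ := rfl
  map_smul' _ _ := rfl
  left_inv M := Subtype.ext (by ext; simp)
  right_inv M := Subtype.ext (by ext; simp)

theorem flip_apply (M : UTn n F) (p q : Fin n) :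
    (flip M : Matrix (Fin n) (Fin n) F) p q = (M : Matrix (Fin n) (Fin n) F) q.rev p.rev := rfl

theorem flip_flip (M : UTn n F) : flip (flip M) = M :=
  flip.left_inv M

theorem flip_mul (M N : UTn n F) : flip (M * N) = flip N * flip M :=
  Subtype.ext <| by
    change ((M.1 * N.1)ᵀ).submatrix Fin.revPerm Fin.revPerm
      = (N.1ᵀ).submatrix Fin.revPerm Fin.revPerm * (M.1ᵀ).submatrix Fin.revPerm Fin.revPerm
    rw [transpose_mul, submatrix_mul_equiv]

theorem flip_mem_utComponent {G : Type*} [Group G] {η : ℕ → G}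
    (hη : ∀ i, i < n - 1 → η i = (η (n - 2 - i))⁻¹) {g : G} {M : UTn n F}
    (hM : M ∈ utComponent n η g) : flip M ∈ utComponent n η g⁻¹ := by
  intro p q hpq
  rw [flip_apply] at hpq
  have hqp : p ≤ q := Fin.rev_le_rev.mp (not_lt.mp fun h => hpq (M.2 h))
  have hdeg := hM _ _ hpq
  rw [Fin.val_rev, Fin.val_rev, show n - (q + 1) = n - 1 - q by omega,
    show n - (p + 1) = n - 1 - p by omega, degElem_reflect η hη hqp q.isLt] at hdeg
  rw [← hdeg, inv_inv]

section AntiAutomorphism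

variable (ρ : UTn n F ≃ₗ[F] UTn n F)

theorem existsUnique_map_matrixUnit_apply_self_ne_zero (hρ : ∀ x y, ρ (x * y) = ρ y * ρ x)
    (p : Fin n) : ∃! k, (ρ (matrixUnit k k le_rfl) : Matrix (Fin n) (Fin n) F) p p ≠ 0 := by
  refine existsUnique_apply_self_ne_zero (fun k => (ρ (matrixUnit k k le_rfl)).2) ?_ ?_ p
  · have hsum : ∑ k, (matrixUnit k k le_rfl : UTn n F) = 1 :=
      Subtype.ext (by simp [sum_single_one])
    rw [← AddSubmonoidClass.coe_finsetSum, ← map_sum, hsum,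
      map_one_of_surjective_of_map_mul_rev ρ.surjective hρ, OneMemClass.coe_one]
  · intro k l hkl
    have horth : (matrixUnit l l le_rfl : UTn n F) * matrixUnit k k le_rfl = 0 :=
      Subtype.ext (by simp [single_mul_single_of_ne _ _ _ _ (Ne.symm hkl)])
    rw [← MulMemClass.coe_mul, ← hρ, horth, map_zero, ZeroMemClass.coe_zero]

theorem exists_map_matrixUnit_apply_ne_zero (hρ : ∀ x y, ρ (x * y) = ρ y * ρ x) {i j : Fin n}
    (hij : i ≤ j) : ∃ p q, p ≤ q ∧
      (ρ (matrixUnit j j le_rfl) : Matrix (Fin n) (Fin n) F) p p ≠ 0 ∧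
      (ρ (matrixUnit i i le_rfl) : Matrix (Fin n) (Fin n) F) q q ≠ 0 ∧
      (ρ (matrixUnit i j hij) : Matrix (Fin n) (Fin n) F) p q ≠ 0 := by
  set x : UTn n F := matrixUnit i j hij
  have hx : x = matrixUnit i i le_rfl * x * matrixUnit j j le_rfl := Subtype.ext (by simp [x])
  have hρx : ρ x = ρ (matrixUnit j j le_rfl) * ρ x * ρ (matrixUnit i i le_rfl) := by
    conv_lhs => rw [hx, hρ, hρ, ← mul_assoc]
  have hx0 : x ≠ 0 := fun h =>
    one_ne_zero (α := F) (by simpa [x] using congrArg (fun M => M.1 i j) h)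
  have hρx0 : (ρ x : Matrix (Fin n) (Fin n) F) ≠ 0 := fun h =>
    hx0 (ρ.map_eq_zero_iff.mp (Subtype.ext h))
  obtain ⟨p, q, hne, hiso⟩ := exists_isolated_apply_ne_zero hρx0
  have hentry := congrFun₂ (congrArg Subtype.val hρx) p q
  rw [MulMemClass.coe_mul, MulMemClass.coe_mul,
    (ρ _).2.mul_mul_apply_of_isolated (ρ _).2 hiso] at hentry
  have hprod := hentry ▸ hne
  exact ⟨p, q, not_lt.mp fun h => hne ((ρ x).2 h),
    left_ne_zero_of_mul (left_ne_zero_of_mul hprod), right_ne_zero_of_mul hprod, hne⟩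

theorem eq_inv_of_degreeInverting {G : Type*} [Group G] {η : ℕ → G}
    (hρ : ∀ x y, ρ (x * y) = ρ y * ρ x)
    (hdeg : ∀ g M, M ∈ utComponent n η g → ρ M ∈ utComponent n η g⁻¹) {i : ℕ}
    (hi : i < n - 1) : η i = (η (n - 2 - i))⁻¹ := by
  obtain ⟨m, rfl⟩ : ∃ m, n = m + 1 := ⟨n - 1, by omega⟩
  choose σ _ hσu using existsUnique_map_matrixUnit_apply_self_ne_zero ρ hρ
  have key (i : Fin m) :
      ∃ p q, p ≤ q ∧ σ p = i.succ ∧ σ q = i.castSucc ∧ degElem η p q = (η i)⁻¹ := by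
    obtain ⟨p, q, hpq, hp, hq, hρpq⟩ :=
      exists_map_matrixUnit_apply_ne_zero ρ hρ (Fin.castSucc_lt_succ (i := i)).le
    refine ⟨p, q, hpq, (hσu p _ hp).symm, (hσu q _ hq).symm, ?_⟩
    simpa [degElem_succ] using hdeg _ _ (matrixUnit_mem_utComponent η _ _ _) p q hρpq
  have hσ_rev : σ = Fin.rev := Fin.eq_rev_of_forall_exists σ fun i => by
    obtain ⟨p, q, hpq, hp, hq, -⟩ := key i
    exact ⟨p, q, hpq, hp, hq⟩
  obtain ⟨p, q, -, hp, hq, hpq⟩ := key ⟨i, by omega⟩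
  rw [hσ_rev, Fin.rev_eq_iff] at hp hq
  subst hp hq
  simp only [Fin.val_rev, Fin.val_succ, Fin.val_castSucc] at hpq
  rw [show m + 1 - (i + 1) = m + 1 - (i + 1 + 1) + 1 by omega, degElem_succ] at hpq
  rw [show m + 1 - 2 - i = m + 1 - (i + 1 + 1) by omega, hpq, inv_inv]

end AntiAutomorphism

end UTn

theorem UTn_exists_degInvInvolution_iff_general
    {F : Type*} [Field F]
    {G : Type*} [Group G] (n : ℕ) (η : ℕ → G) :
    (∃ ρ : (UTn n F) ≃ₗ[F] (UTn n F),
        (∀ x y : UTn n F, ρ (x * y) = ρ y * ρ x) ∧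
        (∀ x : UTn n F, ρ (ρ x) = x) ∧
        (∀ (g : G) (M : UTn n F), M ∈ utComponent n η g →
          ρ M ∈ utComponent n η g⁻¹)) ↔
    (∀ i : ℕ, i < n - 1 → η i = (η (n - 2 - i))⁻¹) := by
  constructor
  · rintro ⟨ρ, hρ, -, hdeg⟩ i hi
    exact UTn.eq_inv_of_degreeInverting ρ hρ hdeg hi
  · intro hη
    exact ⟨UTn.flip, UTn.flip_mul, UTn.flip_flip, fun _ _ => UTn.flip_mem_utComponent hη⟩

/-- `UT_n` with the elementary `G`-grading given by `η = (g₁,…,g_{n−1})`,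
`deg e_{i,i+1} = g_i`, admits a degree-inverting involution (an `F`-linear
anti-automorphism of order two mapping the component of degree `g` into the component of
degree `g⁻¹`) if and only if `g_i = g_{n−i}⁻¹` for every `i = 1,…,n−1`
(in `0`-based indexing: `η i = (η (n−2−i))⁻¹` for all `i < n−1`). -/
theorem UTn_exists_degInvInvolution_iff
    {F : Type*} [Field F] (hchar : (2 : F) ≠ 0)
    {G : Type*} [Group G] (n : ℕ) (η : ℕ → G) :
    (∃ ρ : (UTn n F) ≃ₗ[F] (UTn n F),
        (∀ x y : UTn n F, ρ (x * y) = ρ y * ρ x) ∧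
        (∀ x : UTn n F, ρ (ρ x) = x) ∧
        (∀ (g : G) (M : UTn n F), M ∈ utComponent n η g →
          ρ M ∈ utComponent n η g⁻¹)) ↔
    (∀ i : ℕ, i < n - 1 → η i = (η (n - 2 - i))⁻¹) :=
  UTn_exists_degInvInvolution_iff_general n η
end

section
/- Let n = 2m and write an invertible u ∈ UT_n in block form u = [[X, Z],[0, Y]] with X, Y ∈ UT_m invertible and Z ∈ M_m. If τ(u) = u (τ the flip along the antidiagonal) then v = [[Id_m, Z/2],[0, Y]] satisfies u = v τ(v). -/
open Matrix

/-- The canonical involution of `M_{m+m}(F)`: the flip along the antidiagonal,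
`τ(e_{ab}) = e_{rev b, rev a}`. -/
def antitransp {F : Type*} [Field F] {n : ℕ}
    (M : Matrix (Fin n) (Fin n) F) : Matrix (Fin n) (Fin n) F :=
  fun i j => M j.rev i.rev

lemma rev_finSumFinEquiv_inl {m : ℕ} (a : Fin m) :
    (finSumFinEquiv (Sum.inl a) : Fin (m + m)).rev = finSumFinEquiv (Sum.inr a.rev) := by
  apply Fin.ext
  simp [Fin.val_rev]
  omega

lemma rev_finSumFinEquiv_inr {m : ℕ} (a : Fin m) :
    (finSumFinEquiv (Sum.inr a) : Fin (m + m)).rev = finSumFinEquiv (Sum.inl a.rev) := by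
  apply Fin.ext
  simp [Fin.val_rev]
  omega

lemma antitransp_reindex {F : Type*} [Field F] {m : ℕ}
    (A B C D : Matrix (Fin m) (Fin m) F) :
    antitransp ((Matrix.reindex finSumFinEquiv finSumFinEquiv) (Matrix.fromBlocks A B C D))
      = (Matrix.reindex finSumFinEquiv finSumFinEquiv)
          (Matrix.fromBlocks (antitransp D) (antitransp B) (antitransp C) (antitransp A)) := by
  ext i j
  obtain ⟨p, rfl⟩ := finSumFinEquiv.surjective i
  obtain ⟨q, rfl⟩ := finSumFinEquiv.surjective j
  rcases p with a | a <;> rcases q with b | b <;>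
    simp only [antitransp, Matrix.reindex_apply, Matrix.submatrix_apply,
      rev_finSumFinEquiv_inl, rev_finSumFinEquiv_inr, Equiv.symm_apply_apply,
      Matrix.fromBlocks_apply₁₁, Matrix.fromBlocks_apply₁₂,
      Matrix.fromBlocks_apply₂₁, Matrix.fromBlocks_apply₂₂]

/-- Let `n = 2m` and `u = [[X, Z],[0, Y]] ∈ UT_n` with `X, Y ∈ UT_m` invertible.
If `τ(u) = u` (`τ` the flip along the antidiagonal), then
`v = [[Id, Z/2],[0, Y]]` satisfies `u = v τ(v)`. -/
theorem tau_symmetric_factorization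
    {F : Type*} [Field F] (hchar : (2 : F) ≠ 0) (m : ℕ)
    (X Y Z : Matrix (Fin m) (Fin m) F)
    (hX : X.BlockTriangular id) (hY : Y.BlockTriangular id)
    (hXu : IsUnit X) (hYu : IsUnit Y) :
    ∀ u v : Matrix (Fin (m + m)) (Fin (m + m)) F,
      u = (Matrix.reindex finSumFinEquiv finSumFinEquiv) (Matrix.fromBlocks X Z 0 Y) →
      v = (Matrix.reindex finSumFinEquiv finSumFinEquiv)
            (Matrix.fromBlocks 1 ((2 : F)⁻¹ • Z) 0 Y) →
      antitransp u = u → u = v * antitransp v := by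
  intro u v hu hv htau
  subst hu hv
  rw [antitransp_reindex] at htau
  have htau' := (Matrix.reindex finSumFinEquiv finSumFinEquiv).injective htau
  have hXY : antitransp Y = X := by
    have := congrArg Matrix.toBlocks₁₁ htau'
    simpa [Matrix.toBlocks_fromBlocks₁₁] using this
  have hZZ : antitransp Z = Z := by
    have := congrArg Matrix.toBlocks₁₂ htau'
    simpa [Matrix.toBlocks_fromBlocks₁₂] using this
  have hs : antitransp ((2 : F)⁻¹ • Z) = (2 : F)⁻¹ • Z := by
    funext i j
    simp only [antitransp, Matrix.smul_apply]
    rw [show Z j.rev i.rev = antitransp Z i j from rfl, hZZ]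
  have h1 : antitransp (1 : Matrix (Fin m) (Fin m) F) = 1 := by
    funext i j
    simp only [antitransp, Matrix.one_apply]
    simp [Fin.rev_inj, eq_comm]
  have h0 : antitransp (0 : Matrix (Fin m) (Fin m) F) = 0 := rfl
  rw [antitransp_reindex, hXY, hs, h1, h0]
  rw [← Matrix.reindexAlgEquiv_apply F, ← Matrix.reindexAlgEquiv_apply F,
    ← Matrix.reindexAlgEquiv_apply F, ← _root_.map_mul, Matrix.fromBlocks_multiply]
  have h2 : (2:F)⁻¹ • Z + (2:F)⁻¹ • Z = Z := by
    rw [← add_smul, show (2:F)⁻¹ + (2:F)⁻¹ = 1 by rw [← two_mul, mul_inv_cancel₀ hchar], one_smul]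
  congr 1 <;> simp [h2]
end
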